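/- Let F be a field and let π₁, π₂, x, y ∈ F^× be such that 1 + π₁x, 1 + π₂y, and 1 + π₁x(1 + π₂y) are all nonzero. Set z = xy/(1 + π₁x). Then in K₂^M(F): {1 + π₁x(1 + π₂y), 1 + π₂y} = −{1 + π₁π₂z, −π₁x} − {1 + π₁x, −π₁x}. -/

import Mathlib

open TensorProduct

/-- The Steinberg subgroup of `F^× ⊗ F^×`, generated by `a ⊗ (1-a)` for `a ≠ 0, 1`. -/
noncomputable def SteinbergSubgroup (F : Type) [Field F] :
    AddSubgroup (Additive Fˣ ⊗[ℤ] Additive Fˣ) :=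
  AddSubgroup.closure
    { z | ∃ (a : Fˣ) (h : (a : F) ≠ 1),
        z = Additive.ofMul a ⊗ₜ[ℤ]
            Additive.ofMul (Units.mk0 (1 - (a : F)) (sub_ne_zero.mpr (Ne.symm h))) }

/-- The second Milnor K-group `K₂^M(F)` of a field `F`. -/
def MilnorK2 (F : Type) [Field F] :=
  (Additive Fˣ ⊗[ℤ] Additive Fˣ) ⧸ SteinbergSubgroup F

noncomputable instance (F : Type) [Field F] : AddCommGroup (MilnorK2 F) :=
  QuotientAddGroup.Quotient.addCommGroup (SteinbergSubgroup F)

/-- The Milnor symbol `{a, b} ∈ K₂^M(F)`. -/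
noncomputable def MilnorK2.symbol {F : Type} [Field F] (a b : Fˣ) : MilnorK2 F :=
  QuotientAddGroup.mk (Additive.ofMul a ⊗ₜ[ℤ] Additive.ofMul b)

/- With c = π₁x(1 + π₂y), the Steinberg relation {1 + c, -c} = 0 together with
-c = (1 + π₂y)(-π₁x) gives {1 + c, 1 + π₂y} = -{1 + c, -π₁x}; the factorization
1 + c = (1 + π₁x)(1 + π₁π₂z) then splits the right-hand side. -/

namespace MilnorK2

variable {F : Type} [Field F]

theorem symbol_mul_left (a b c : Fˣ) : symbol (a * b) c = symbol a c + symbol b c := by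
  rw [symbol, ofMul_mul, add_tmul]
  rfl

theorem symbol_mul_right (a b c : Fˣ) : symbol a (b * c) = symbol a b + symbol a c := by
  rw [symbol, ofMul_mul, tmul_add]
  rfl

theorem symbol_eq_zero_of_add_eq_one (a b : Fˣ) (hab : (a : F) + b = 1) : symbol a b = 0 := by
  have ha : (a : F) ≠ 1 := fun h => b.ne_zero (by linear_combination hab - h)
  have hb : b = Units.mk0 (1 - (a : F)) (sub_ne_zero.mpr (Ne.symm ha)) :=
    Units.ext (by simp only [Units.val_mk0]; linear_combination hab)
  exact (QuotientAddGroup.eq_zero_iff _).mpr (AddSubgroup.subset_closure ⟨a, ha, hb ▸ rfl⟩)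

end MilnorK2

open MilnorK2

theorem stmt11_general {F : Type} [Field F] (π₁ π₂ x y : F)
    (hπ₁ : π₁ ≠ 0) (hx : x ≠ 0)
    (h1 : (1 : F) + π₁ * x ≠ 0) (h2 : (1 : F) + π₂ * y ≠ 0)
    (h3 : (1 : F) + π₁ * x * ((1 : F) + π₂ * y) ≠ 0) :
    ∀ hz : (1 : F) + π₁ * π₂ * (x * y / ((1 : F) + π₁ * x)) ≠ 0,
      MilnorK2.symbol (Units.mk0 ((1 : F) + π₁ * x * ((1 : F) + π₂ * y)) h3)
          (Units.mk0 ((1 : F) + π₂ * y) h2) =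
        - MilnorK2.symbol
            (Units.mk0 ((1 : F) + π₁ * π₂ * (x * y / ((1 : F) + π₁ * x))) hz)
            (- Units.mk0 (π₁ * x) (mul_ne_zero hπ₁ hx))
          - MilnorK2.symbol (Units.mk0 ((1 : F) + π₁ * x) h1)
              (- Units.mk0 (π₁ * x) (mul_ne_zero hπ₁ hx)) := by
  intro hz
  have hsplit : Units.mk0 (1 + π₁ * x * (1 + π₂ * y)) h3
      = Units.mk0 (1 + π₁ * x) h1 * Units.mk0 (1 + π₁ * π₂ * (x * y / (1 + π₁ * x))) hz :=
    Units.ext (by simp only [Units.val_mul, Units.val_mk0]; field_simp; ring)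
  have hsteinberg : symbol (Units.mk0 (1 + π₁ * x * (1 + π₂ * y)) h3)
      (Units.mk0 (1 + π₂ * y) h2 * -Units.mk0 (π₁ * x) (mul_ne_zero hπ₁ hx)) = 0 :=
    symbol_eq_zero_of_add_eq_one _ _
      (by simp only [Units.val_mul, Units.val_neg, Units.val_mk0]; ring)
  rw [symbol_mul_right, add_eq_zero_iff_eq_neg] at hsteinberg
  rw [hsteinberg, hsplit, symbol_mul_left]
  abel

/-- For `π₁, π₂, x, y ∈ F^×` with `1 + π₁x`, `1 + π₂y` and `1 + π₁x(1 + π₂y)` nonzero,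
setting `z = xy/(1 + π₁x)` (so that `1 + π₁π₂z ≠ 0` automatically), one has
`{1 + π₁x(1 + π₂y), 1 + π₂y} = -{1 + π₁π₂z, -π₁x} - {1 + π₁x, -π₁x}` in `K₂^M(F)`. -/
theorem stmt11 {F : Type} [Field F] (π₁ π₂ x y : F)
    (hπ₁ : π₁ ≠ 0) (hπ₂ : π₂ ≠ 0) (hx : x ≠ 0) (hy : y ≠ 0)
    (h1 : (1 : F) + π₁ * x ≠ 0) (h2 : (1 : F) + π₂ * y ≠ 0)
    (h3 : (1 : F) + π₁ * x * ((1 : F) + π₂ * y) ≠ 0) :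
    ∀ hz : (1 : F) + π₁ * π₂ * (x * y / ((1 : F) + π₁ * x)) ≠ 0,
      MilnorK2.symbol (Units.mk0 ((1 : F) + π₁ * x * ((1 : F) + π₂ * y)) h3)
          (Units.mk0 ((1 : F) + π₂ * y) h2) =
        - MilnorK2.symbol
            (Units.mk0 ((1 : F) + π₁ * π₂ * (x * y / ((1 : F) + π₁ * x))) hz)
            (- Units.mk0 (π₁ * x) (mul_ne_zero hπ₁ hx))
          - MilnorK2.symbol (Units.mk0 ((1 : F) + π₁ * x) h1)
              (- Units.mk0 (π₁ * x) (mul_ne_zero hπ₁ hx)) :=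
  stmt11_general π₁ π₂ x y hπ₁ hx h1 h2 h3
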